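/- Let X^{(1)}, X^{(2)}, … be i.i.d. copies of a random vector X = (X₁,…,X_d) whose joint distribution function F is a MEV distribution with unit Fréchet marginals, set l(x₁,…,x_d) = −log F(x₁,…,x_d), and fix x₁,…,x_d > 0. Let F̂_j(u) = (n+1)^{-1} Σ_{k=1}^n 1{X_j^{(k)} ≤ u} denote the (rank-based) empirical distribution function of the j-th coordinate, let Ŷ_n = n^{-1} Σ_{i=1}^n ( F̂₁(X₁^{(i)})^{x₁} ∨ … ∨ F̂_d(X_d^{(i)})^{x_d} ), and define the rank-based estimator l̂_n(x₁,…,x_d) = Ŷ_n / (1 − Ŷ_n). Then l̂_n(x₁,…,x_d) → l(x₁,…,x_d) almost surely as n → ∞. -/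

import Mathlib

open MeasureTheory Filter Finset

/-- The joint distribution function of the random vector `X` under `μ`. -/
noncomputable def jointCDF {Ω : Type*} [MeasurableSpace Ω] (μ : Measure Ω) {d : ℕ}
    (X : Fin d → Ω → ℝ) (x : Fin d → ℝ) : ℝ :=
  (μ {ω | ∀ i, X i ω ≤ x i}).toReal

/-- The marginal distribution function of the `i`-th coordinate of `X` under `μ`. -/
noncomputable def margCDF {Ω : Type*} [MeasurableSpace Ω] (μ : Measure Ω) {d : ℕ}
    (X : Fin d → Ω → ℝ) (i : Fin d) (u : ℝ) : ℝ :=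
  (μ {ω | X i ω ≤ u}).toReal

/-- `l^{(I₁,I₂)}(x,y) = -log F(a₁,…,a_d)` where `aᵢ = x` on `I₁`, `aᵢ = y` on `I₂` and
`aᵢ = ∞` otherwise (taking the limit of `F` in those arguments, i.e. dropping the
corresponding constraints). -/
noncomputable def mevL {Ω : Type*} [MeasurableSpace Ω] (μ : Measure Ω) {d : ℕ}
    (X : Fin d → Ω → ℝ) (I₁ I₂ : Finset (Fin d)) (x y : ℝ) : ℝ :=
  -Real.log (μ {ω | (∀ i ∈ I₁, X i ω ≤ x) ∧ (∀ j ∈ I₂, X j ω ≤ y)}).toReal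

/-- The extremal coefficient `ε_I = l^{(I,∅)}(1,1)` of the sub-vector `X_I`. -/
noncomputable def extCoef {Ω : Type*} [MeasurableSpace Ω] (μ : Measure Ω) {d : ℕ}
    (X : Fin d → Ω → ℝ) (I : Finset (Fin d)) : ℝ :=
  mevL μ X I ∅ 1 1

/-- `M(I) = max_{i ∈ I} F_i(X_i)`. -/
noncomputable def Msub {Ω : Type*} [MeasurableSpace Ω] (μ : Measure Ω) {d : ℕ}
    (X : Fin d → Ω → ℝ) (I : Finset (Fin d)) (hI : I.Nonempty) (ω : Ω) : ℝ :=
  I.sup' hI fun i => margCDF μ X i (X i ω)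

/-- The stable tail dependence function `l(x₁,…,x_d) = -log F(x₁,…,x_d)`. -/
noncomputable def stdf {Ω : Type*} [MeasurableSpace Ω] (μ : Measure Ω) {d : ℕ}
    (X : Fin d → Ω → ℝ) (x : Fin d → ℝ) : ℝ :=
  -Real.log (jointCDF μ X x)

/-- `X` has a multivariate extreme value (max-stable) distribution with unit Fréchet
marginals under the probability measure `μ`. -/
structure IsMEVFrechet {Ω : Type*} [MeasurableSpace Ω] (μ : Measure Ω) {d : ℕ}
    (X : Fin d → Ω → ℝ) : Prop where
  meas : ∀ i, Measurable (X i)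
  frechet : ∀ i, ∀ u : ℝ, 0 < u → margCDF μ X i u = Real.exp (-u⁻¹)
  maxStable : ∀ t : ℝ, 0 < t → ∀ x : Fin d → ℝ, (∀ i, 0 < x i) →
    jointCDF μ X (fun i => t * x i) ^ t = jointCDF μ X x

/-- The rank-based empirical distribution function
`F̂_j(u) = (n+1)⁻¹ Σ_{k<n} 1{X_j^{(k)} ≤ u}`. -/
noncomputable def empCDF {Ω : Type*} {d : ℕ} (Xs : ℕ → Ω → Fin d → ℝ)
    (n : ℕ) (j : Fin d) (u : ℝ) (ω : Ω) : ℝ :=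
  ((n : ℝ) + 1)⁻¹ * ∑ k ∈ Finset.range n, if Xs k ω j ≤ u then 1 else 0

/-- The rank-based sample mean
`Ŷ_n = n⁻¹ Σ_{i<n} (F̂₁(X₁^{(i)})^{x₁} ∨ … ∨ F̂_d(X_d^{(i)})^{x_d})`. -/
noncomputable def Yhat {Ω : Type*} {d : ℕ} (hd : 0 < d) (Xs : ℕ → Ω → Fin d → ℝ)
    (x : Fin d → ℝ) (n : ℕ) (ω : Ω) : ℝ :=
  (n : ℝ)⁻¹ * ∑ i ∈ Finset.range n,
    Finset.univ.sup' ⟨⟨0, hd⟩, Finset.mem_univ _⟩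
      fun j => empCDF Xs n j (Xs i ω j) ω ^ x j

/-!
Let `Z = max_j F_j(X_j)^{x_j}`. For `u ∈ (0, 1)` and `X > 0`, `Z ≤ u` means `X ≤ t • x` with
`t = (-log u)⁻¹`, so max-stability gives `P(Z ≤ u) = F(x)^{-log u} = u^l` and hence
`E Z = l / (l + 1)`; by the strong law the sample mean of the `Z^{(i)}` converges to this.
`Ŷ_n` is the same mean with `F_j` replaced by `F̂_j`. Since `F_j` is continuous, Pólya's argument
upgrades the pointwise strong law for `F̂_j` to uniform convergence (Glivenko–Cantelli), and as
`t ↦ t^{x_j}` is uniformly continuous on `[0, 1]`, `Ŷ_n` has the same limit. Finally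
`y ↦ y / (1 - y)` maps `l / (l + 1)` to `l`.
-/

open scoped Topology
open ProbabilityTheory

lemma Finset.abs_sup'_sub_sup'_lt {ι : Type*} {s : Finset ι} (hs : s.Nonempty) {f g : ι → ℝ}
    {ε : ℝ} (h : ∀ i ∈ s, |f i - g i| < ε) : |s.sup' hs f - s.sup' hs g| < ε := by
  rw [abs_sub_lt_iff, sub_lt_iff_lt_add, sub_lt_iff_lt_add, Finset.sup'_lt_iff, Finset.sup'_lt_iff]
  constructor
  · intro i hi
    linarith [(abs_sub_lt_iff.1 (h i hi)).1, Finset.le_sup' g hi]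
  · intro i hi
    linarith [(abs_sub_lt_iff.1 (h i hi)).2, Finset.le_sup' f hi]

lemma TendstoUniformly.finset_sup' {ι α β : Type*} {p : Filter β} {s : Finset ι}
    (hs : s.Nonempty) {F : ι → β → α → ℝ} {f : ι → α → ℝ}
    (h : ∀ i ∈ s, TendstoUniformly (F i) (f i) p) :
    TendstoUniformly (fun n a => s.sup' hs fun i => F i n a) (fun a => s.sup' hs fun i => f i a)
      p := by
  simp only [Metric.tendstoUniformly_iff] at h ⊢
  intro ε hε
  filter_upwards [(Filter.eventually_all_finset s).2 fun i hi => h i hi ε hε] with n hn a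
  exact Finset.abs_sup'_sub_sup'_lt hs fun i hi => hn i hi a

lemma TendstoUniformly.rpow_const_of_mem_Icc {α β : Type*} {p : Filter β} {F : β → α → ℝ}
    {f : α → ℝ} (h : TendstoUniformly F f p) (hF : ∀ n a, F n a ∈ Set.Icc (0 : ℝ) 1)
    (hf : ∀ a, f a ∈ Set.Icc (0 : ℝ) 1) {r : ℝ} (hr : 0 ≤ r) :
    TendstoUniformly (fun n a => F n a ^ r) (fun a => f a ^ r) p :=
  (isCompact_Icc.uniformContinuousOn_of_continuous
    (Real.continuous_rpow_const hr).continuousOn).comp_tendstoUniformly hF hf h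

lemma tendsto_mean_of_tendstoUniformly {α : Type*} {F : ℕ → α → ℝ} {g : α → ℝ} (a : ℕ → α)
    {m : ℝ} (hF : TendstoUniformly F g atTop)
    (hg : Tendsto (fun n : ℕ => (n : ℝ)⁻¹ * ∑ i ∈ range n, g (a i)) atTop (𝓝 m)) :
    Tendsto (fun n : ℕ => (n : ℝ)⁻¹ * ∑ i ∈ range n, F n (a i)) atTop (𝓝 m) := by
  have hdiff : Tendsto (fun n : ℕ => (n : ℝ)⁻¹ * ∑ i ∈ range n, (F n (a i) - g (a i))) atTop
      (𝓝 0) := by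
    rw [Metric.tendsto_atTop]
    intro ε hε
    obtain ⟨N, hN⟩ := eventually_atTop.1 (Metric.tendstoUniformly_iff.1 hF (ε / 2) (by positivity))
    refine ⟨N, fun n hn => ?_⟩
    rw [Real.dist_eq, sub_zero, abs_mul, abs_inv, Nat.abs_cast]
    calc (n : ℝ)⁻¹ * |∑ i ∈ range n, (F n (a i) - g (a i))|
        ≤ (n : ℝ)⁻¹ * (#(range n) • (ε / 2)) := by
          gcongr
          refine (abs_sum_le_sum_abs _ _).trans (sum_le_card_nsmul _ _ _ fun i _ => ?_)
          rw [← Real.dist_eq, dist_comm]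
          exact (hN n hn (a i)).le
      _ ≤ ε / 2 := by
          rw [card_range, nsmul_eq_mul, ← mul_assoc]
          exact mul_le_of_le_one_left (by positivity) (inv_mul_le_one_of_le₀ le_rfl (by positivity))
      _ < ε := by linarith
  simpa only [add_zero, ← mul_add, ← sum_add_distrib, add_sub_cancel] using hg.add hdiff

section Polya

variable {H : ℕ → ℝ → ℝ} {G : ℝ → ℝ}

lemma eventually_forall_lt_add_of_tendsto_at_quantiles (hH : ∀ n, Monotone (H n))
    (hG : Monotone G) (hH1 : ∀ n v, H n v ≤ 1) (hG0 : ∀ v, 0 ≤ G v)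
    (hq : ∀ q : ℚ, 0 < q → q < 1 → ∃ w, G w = q ∧ Tendsto (fun n => H n w) atTop (𝓝 q))
    {ε : ℝ} (hε : 0 < ε) : ∀ᶠ n in atTop, ∀ v, H n v < G v + ε := by
  obtain ⟨M, hM⟩ := exists_nat_gt (2 / ε)
  have hM0 : (0 : ℝ) < M := lt_trans (by positivity) hM
  have hMq : (0 : ℚ) < M := by exact_mod_cast hM0
  have hMε : (M : ℝ)⁻¹ < ε / 2 := by rwa [inv_lt_comm₀ hM0 (by positivity), inv_div]
  choose! w hwG hwH using hq
  -- the grid `m / M`, `0 < m < M`, on which convergence is uniform because it is finite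
  have hgrid : ∀ᶠ n in atTop, ∀ m ∈ range M, 0 < m →
      H n (w ((m : ℚ) / M)) < (m : ℝ) / M + ε / 2 := by
    refine (eventually_all_finset _).2 fun m hm => eventually_imp_distrib_left.2 fun hm0 => ?_
    have hq0 : (0 : ℚ) < m / M := div_pos (by exact_mod_cast hm0) hMq
    have hq1 : (m : ℚ) / M < 1 := (div_lt_one hMq).2 (by exact_mod_cast mem_range.1 hm)
    refine (hwH _ hq0 hq1).eventually_lt_const ?_
    push_cast
    linarith
  filter_upwards [hgrid] with n hn v
  set m := ⌊G v * M⌋₊ + 1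
  have hvm : G v < (m : ℝ) / M := by
    rw [lt_div_iff₀ hM0]; push_cast [m]; exact Nat.lt_floor_add_one _
  have hmv : (m : ℝ) / M ≤ G v + (M : ℝ)⁻¹ := by
    rw [div_le_iff₀ hM0, add_mul, inv_mul_cancel₀ hM0.ne']
    push_cast [m]
    linarith [Nat.floor_le (mul_nonneg (hG0 v) hM0.le)]
  by_cases hmM : m < M
  · have hq0 : (0 : ℚ) < m / M := div_pos (Nat.cast_pos.2 (Nat.succ_pos _)) hMq
    have hq1 : (m : ℚ) / M < 1 := (div_lt_one hMq).2 (by exact_mod_cast hmM)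
    have hvw : v < w ((m : ℚ) / M) :=
      hG.reflect_lt (by rw [hwG _ hq0 hq1]; push_cast; exact hvm)
    calc H n v ≤ H n (w ((m : ℚ) / M)) := hH n hvw.le
      _ < (m : ℝ) / M + ε / 2 := hn m (mem_range.2 hmM) (Nat.succ_pos _)
      _ < G v + ε := by linarith
  · have : (1 : ℝ) ≤ m / M := by
      rw [le_div_iff₀ hM0, one_mul]; exact_mod_cast not_lt.1 hmM
    linarith [hH1 n v]

theorem tendstoUniformly_of_tendsto_at_quantiles (hH : ∀ n, Monotone (H n)) (hG : Monotone G)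
    (hH01 : ∀ n v, H n v ∈ Set.Icc (0 : ℝ) 1) (hG01 : ∀ v, G v ∈ Set.Icc (0 : ℝ) 1)
    (hq : ∀ q : ℚ, 0 < q → q < 1 → ∃ w, G w = q ∧ Tendsto (fun n => H n w) atTop (𝓝 q)) :
    TendstoUniformly H G atTop := by
  rw [Metric.tendstoUniformly_iff]
  intro ε hε
  have hupper := eventually_forall_lt_add_of_tendsto_at_quantiles hH hG
    (fun n v => (hH01 n v).2) (fun v => (hG01 v).1) hq hε
  -- the lower bound is the upper bound for the reflections `1 - H n (-v)` and `1 - G (-v)`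
  have hlower := eventually_forall_lt_add_of_tendsto_at_quantiles (H := fun n v => 1 - H n (-v))
    (G := fun v => 1 - G (-v)) (fun n a b hab => sub_le_sub_left (hH n (neg_le_neg hab)) 1)
    (fun a b hab => sub_le_sub_left (hG (neg_le_neg hab)) 1) (fun n v => by simp [(hH01 n _).1])
    (fun v => by simp [(hG01 _).2]) fun q hq0 hq1 => by
      obtain ⟨w, hwG, hwH⟩ := hq (1 - q) (by linarith) (by linarith)
      refine ⟨-w, by simp [hwG], ?_⟩
      simpa using (tendsto_const_nhds (x := (1 : ℝ))).sub hwH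
    hε
  filter_upwards [hupper, hlower] with n hup hlow v
  rw [Real.dist_eq, abs_sub_lt_iff]
  have := hlow (-v)
  simp only [neg_neg] at this
  exact ⟨by linarith, by linarith [hup v]⟩

end Polya

lemma exp_neg_inv_rpow_le_iff {y a u : ℝ} (hy : 0 < y) (hu0 : 0 < u) (hu1 : u < 1) :
    Real.exp (-y⁻¹) ^ a ≤ u ↔ y ≤ (-Real.log u)⁻¹ * a := by
  have hc : 0 < -Real.log u := neg_pos.2 (Real.log_neg hu0 hu1)
  rw [← Real.exp_mul, ← Real.le_log_iff_exp_le hu0, le_inv_mul_iff₀ hc, ← le_div_iff₀ hy,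
    neg_mul, neg_le, div_eq_inv_mul]

section CDF

variable {Ω : Type*} [MeasurableSpace Ω] {μ : Measure Ω} {d : ℕ} {X : Fin d → Ω → ℝ}

lemma margCDF_mem_Icc [IsProbabilityMeasure μ] (i : Fin d) (u : ℝ) :
    margCDF μ X i u ∈ Set.Icc (0 : ℝ) 1 :=
  ⟨measureReal_nonneg, measureReal_le_one⟩

lemma margCDF_mono [IsFiniteMeasure μ] (i : Fin d) : Monotone (margCDF μ X i) :=
  fun _ _ huv => measureReal_mono fun _ hω => le_trans hω huv

lemma jointCDF_nonneg (x : Fin d → ℝ) : 0 ≤ jointCDF μ X x := measureReal_nonneg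

lemma stdf_nonneg [IsProbabilityMeasure μ] (x : Fin d → ℝ) : 0 ≤ stdf μ X x :=
  neg_nonneg.2 (Real.log_nonpos (jointCDF_nonneg x) measureReal_le_one)

end CDF

namespace IsMEVFrechet

variable {Ω : Type*} [MeasurableSpace Ω] {μ : Measure Ω} {d : ℕ} {X : Fin d → Ω → ℝ}

lemma margCDF_inv_neg_log (hX : IsMEVFrechet μ X) (i : Fin d) {q : ℝ} (hq0 : 0 < q)
    (hq1 : q < 1) : margCDF μ X i (-Real.log q)⁻¹ = q := by
  rw [hX.frechet i _ (inv_pos.2 (neg_pos.2 (Real.log_neg hq0 hq1))), inv_inv, neg_neg,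
    Real.exp_log hq0]

lemma measure_le_zero (hX : IsMEVFrechet μ X) [IsFiniteMeasure μ] (i : Fin d) :
    μ {ω | X i ω ≤ 0} = 0 := by
  have hlim : Tendsto (fun u : ℝ => Real.exp (-u⁻¹)) (𝓝[>] 0) (𝓝 0) :=
    Real.tendsto_exp_atBot.comp (tendsto_neg_atTop_atBot.comp tendsto_inv_nhdsGT_zero)
  have hle : margCDF μ X i 0 ≤ 0 := ge_of_tendsto hlim <|
    eventually_nhdsWithin_of_forall fun u (hu : 0 < u) =>
      hX.frechet i u hu ▸ margCDF_mono i hu.le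
  exact (measureReal_eq_zero_iff).1 (le_antisymm hle measureReal_nonneg)

lemma ae_pos (hX : IsMEVFrechet μ X) [IsFiniteMeasure μ] : ∀ᵐ ω ∂μ, ∀ i, 0 < X i ω :=
  ae_all_iff.2 fun i => ae_iff.2 <| by simpa only [not_lt] using hX.measure_le_zero i

lemma jointCDF_smul (hX : IsMEVFrechet μ X) {x : Fin d → ℝ} (hx : ∀ i, 0 < x i) {t : ℝ}
    (ht : 0 < t) : jointCDF μ X (fun i => t * x i) = jointCDF μ X x ^ t⁻¹ := by
  rw [← hX.maxStable t ht x hx, ← Real.rpow_mul (jointCDF_nonneg _), mul_inv_cancel₀ ht.ne',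
    Real.rpow_one]

lemma jointCDF_pos (hX : IsMEVFrechet μ X) [IsProbabilityMeasure μ] {x : Fin d → ℝ}
    (hx : ∀ i, 0 < x i) : 0 < jointCDF μ X x := by
  by_contra h0
  have hzero : jointCDF μ X x = 0 := le_antisymm (not_lt.1 h0) (jointCDF_nonneg x)
  -- by max-stability `F` would vanish at every `(n + 1) • x`, but these sets exhaust `Ω`
  have hnull : ∀ n : ℕ, μ {ω | ∀ i, X i ω ≤ ((n : ℝ) + 1) * x i} = 0 := fun n =>
    (measureReal_eq_zero_iff).1 <| by
      change jointCDF μ X (fun i => ((n : ℝ) + 1) * x i) = 0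
      rw [hX.jointCDF_smul hx n.cast_add_one_pos, hzero,
        Real.zero_rpow (inv_pos.2 n.cast_add_one_pos).ne']
  have hcover : Set.univ ⊆ ⋃ n : ℕ, {ω | ∀ i, X i ω ≤ ((n : ℝ) + 1) * x i} := fun ω _ =>
    Set.mem_iUnion.2 <| (eventually_all.2 fun i => tendsto_atTop.1
      ((tendsto_atTop_add_const_right _ 1 tendsto_natCast_atTop_atTop).atTop_mul_const (hx i))
      (X i ω)).exists
  simpa using measure_mono_null hcover (measure_iUnion_null hnull)

end IsMEVFrechet

lemma integral_eq_div_of_measureReal_le_eq_rpow {Ω : Type*} [MeasurableSpace Ω] {μ : Measure Ω}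
    [IsProbabilityMeasure μ] {Z : Ω → ℝ} (hZ : Measurable Z)
    (hZ01 : ∀ ω, Z ω ∈ Set.Icc (0 : ℝ) 1) {a : ℝ} (ha : 0 ≤ a)
    (hcdf : ∀ u ∈ Set.Ioo (0 : ℝ) 1, μ.real {ω | Z ω ≤ u} = u ^ a) :
    ∫ ω, Z ω ∂μ = a / (a + 1) := by
  have hint : Integrable Z μ := .of_mem_Icc 0 1 hZ.aemeasurable (ae_of_all _ hZ01)
  have htail : Set.EqOn (fun u => μ.real {ω | u < Z ω})
      (Set.indicator (Set.Ioo 0 1) fun u => 1 - u ^ a) (Set.Ioi 0) := by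
    intro u (hu0 : 0 < u)
    show μ.real {ω | u < Z ω} = _
    by_cases hu1 : u < 1
    · have hcompl : {ω | u < Z ω} = {ω | Z ω ≤ u}ᶜ := by ext; simp
      rw [Set.indicator_of_mem (Set.mem_Ioo.2 ⟨hu0, hu1⟩), hcompl,
        measureReal_compl (measurableSet_le hZ measurable_const), probReal_univ,
        hcdf u ⟨hu0, hu1⟩]
    · have hempty : {ω | u < Z ω} = ∅ :=
        Set.eq_empty_of_forall_notMem fun ω hω => hu1 (hω.trans_le (hZ01 ω).2)
      rw [Set.indicator_of_notMem fun h => hu1 (Set.mem_Ioo.1 h).2, hempty, measureReal_empty]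
  rw [hint.integral_eq_integral_meas_lt (ae_of_all _ fun ω => (hZ01 ω).1),
    setIntegral_congr_fun measurableSet_Ioi htail, setIntegral_indicator measurableSet_Ioo,
    Set.inter_eq_self_of_subset_right Set.Ioo_subset_Ioi_self, ← integral_Ioc_eq_integral_Ioo,
    ← intervalIntegral.integral_of_le zero_le_one, intervalIntegral.integral_sub
      intervalIntegrable_const (intervalIntegral.intervalIntegrable_rpow' (by linarith)),
    integral_rpow (Or.inl (by linarith)), intervalIntegral.integral_const, Real.one_rpow,
    Real.zero_rpow (by linarith)]
  field_simp
  ring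

/-- With the true margins `G = margCDF μ X` this is the variable `Z = max_j F_j(X_j)^{x_j}`;
`Yhat` is the sample mean of its version with the empirical margins `empCDF`. -/
noncomputable def maxPow {d : ℕ} (hd : 0 < d) (G : Fin d → ℝ → ℝ) (x v : Fin d → ℝ) : ℝ :=
  univ.sup' (univ_nonempty_iff.2 ⟨⟨0, hd⟩⟩) fun j => G j (v j) ^ x j

section maxPow

variable {d : ℕ} (hd : 0 < d) {x : Fin d → ℝ}

lemma maxPow_mem_Icc {G : Fin d → ℝ → ℝ} (hG : ∀ j u, G j u ∈ Set.Icc (0 : ℝ) 1)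
    (hx : ∀ j, 0 ≤ x j) (v : Fin d → ℝ) : maxPow hd G x v ∈ Set.Icc (0 : ℝ) 1 :=
  ⟨le_sup'_of_le _ (mem_univ ⟨0, hd⟩) (Real.rpow_nonneg (hG _ _).1 _),
    sup'_le _ _ fun j _ => Real.rpow_le_one (hG j _).1 (hG j _).2 (hx j)⟩

lemma measurable_maxPow {G : Fin d → ℝ → ℝ} (hG : ∀ j, Measurable (G j)) :
    Measurable (maxPow hd G x) := by
  convert Finset.measurable_sup' (univ_nonempty_iff.2 ⟨⟨0, hd⟩⟩) fun j _ =>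
    ((hG j).comp (measurable_pi_apply j)).pow_const (x j) using 1
  funext v
  rw [Finset.sup'_apply]
  rfl

lemma tendstoUniformly_maxPow {ι : Type*} {p : Filter ι} {H : ι → Fin d → ℝ → ℝ}
    {G : Fin d → ℝ → ℝ} (hH : ∀ j, TendstoUniformly (fun n => H n j) (G j) p)
    (hH01 : ∀ n j u, H n j u ∈ Set.Icc (0 : ℝ) 1) (hG01 : ∀ j u, G j u ∈ Set.Icc (0 : ℝ) 1)
    (hx : ∀ j, 0 ≤ x j) : TendstoUniformly (fun n => maxPow hd (H n) x) (maxPow hd G x) p :=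
  TendstoUniformly.finset_sup' _ fun j _ =>
    ((hH j).rpow_const_of_mem_Icc (fun n => hH01 n j) (hG01 j) (hx j)).comp fun v : Fin d → ℝ => v j

end maxPow

namespace IsMEVFrechet

variable {Ω : Type*} [MeasurableSpace Ω] {μ : Measure Ω} [IsProbabilityMeasure μ] {d : ℕ}
  {X : Fin d → Ω → ℝ} {x : Fin d → ℝ}

lemma measureReal_maxPow_le (hX : IsMEVFrechet μ X) (hd : 0 < d) (hx : ∀ i, 0 < x i) {u : ℝ}
    (hu0 : 0 < u) (hu1 : u < 1) :
    μ.real {ω | maxPow hd (margCDF μ X) x (fun j => X j ω) ≤ u} = u ^ stdf μ X x := by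
  set t := (-Real.log u)⁻¹
  have ht : 0 < t := inv_pos.2 (neg_pos.2 (Real.log_neg hu0 hu1))
  have hsets : {ω | maxPow hd (margCDF μ X) x (fun j => X j ω) ≤ u}
      =ᵐ[μ] {ω | ∀ i, X i ω ≤ t * x i} := by
    rw [eventuallyEq_set]
    filter_upwards [hX.ae_pos] with ω hω
    rw [maxPow, Finset.sup'_le_iff]
    simp only [mem_univ, true_implies]
    refine forall_congr' fun j => ?_
    rw [hX.frechet j _ (hω j), exp_neg_inv_rpow_le_iff (hω j) hu0 hu1]
  rw [measureReal_congr hsets]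
  change jointCDF μ X (fun i => t * x i) = _
  rw [hX.jointCDF_smul hx ht, inv_inv, Real.rpow_def_of_pos (hX.jointCDF_pos hx),
    Real.rpow_def_of_pos hu0, stdf]
  ring_nf

lemma integral_maxPow (hX : IsMEVFrechet μ X) (hd : 0 < d) (hx : ∀ i, 0 < x i) :
    ∫ ω, maxPow hd (margCDF μ X) x (fun j => X j ω) ∂μ = stdf μ X x / (stdf μ X x + 1) :=
  integral_eq_div_of_measureReal_le_eq_rpow
    ((measurable_maxPow hd fun j => (margCDF_mono j).measurable).comp
      (measurable_pi_iff.2 hX.meas))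
    (fun _ => maxPow_mem_Icc hd margCDF_mem_Icc (fun j => (hx j).le) _) (stdf_nonneg x)
    fun _ hu => hX.measureReal_maxPow_le hd hx hu.1 hu.2

end IsMEVFrechet

section empCDF

variable {Ω : Type*} {d : ℕ} {Xs : ℕ → Ω → Fin d → ℝ}

lemma empCDF_mem_Icc (n : ℕ) (j : Fin d) (u : ℝ) (ω : Ω) :
    empCDF Xs n j u ω ∈ Set.Icc (0 : ℝ) 1 := by
  rw [empCDF, sum_boole]
  refine ⟨by positivity, (inv_mul_le_one₀ n.cast_add_one_pos).2 ?_⟩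
  have : #{k ∈ range n | Xs k ω j ≤ u} ≤ n := (card_filter_le _ _).trans (card_range n).le
  exact (Nat.cast_le.2 this).trans (le_add_of_nonneg_right zero_le_one)

lemma monotone_empCDF (n : ℕ) (j : Fin d) (ω : Ω) : Monotone fun u => empCDF Xs n j u ω := by
  intro u v huv
  simp only [empCDF, sum_boole]
  refine mul_le_mul_of_nonneg_left (Nat.cast_le.2 (card_le_card fun k hk => ?_)) (by positivity)
  rw [mem_filter] at hk ⊢
  exact ⟨hk.1, hk.2.trans huv⟩

end empCDF

section Sample

variable {Ω : Type*} [MeasurableSpace Ω] {μ : Measure Ω}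

lemma strong_law_ae_comp {β : Type*} [MeasurableSpace β] {Xs : ℕ → Ω → β}
    (hmeas : ∀ n, Measurable (Xs n)) (hindep : iIndepFun Xs μ)
    (hident : ∀ n, μ.map (Xs n) = μ.map (Xs 0)) {g : β → ℝ} (hg : Measurable g)
    (hint : Integrable (fun ω => g (Xs 0 ω)) μ) :
    ∀ᵐ ω ∂μ, Tendsto (fun n : ℕ => (n : ℝ)⁻¹ * ∑ k ∈ range n, g (Xs k ω)) atTop
      (𝓝 (∫ ω, g (Xs 0 ω) ∂μ)) := by
  simpa only [smul_eq_mul] using strong_law_ae (fun k ω => g (Xs k ω)) hint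
    (fun i j hij => (hindep.indepFun hij).comp hg hg)
    fun k => (IdentDistrib.mk (hmeas k).aemeasurable (hmeas 0).aemeasurable (hident k)).comp hg

variable {d : ℕ} {Xs : ℕ → Ω → Fin d → ℝ}

lemma ae_tendsto_empCDF [IsFiniteMeasure μ] (hmeas : ∀ n, Measurable (Xs n))
    (hindep : iIndepFun Xs μ) (hident : ∀ n, μ.map (Xs n) = μ.map (Xs 0)) (j : Fin d) (u : ℝ) :
    ∀ᵐ ω ∂μ, Tendsto (fun n => empCDF Xs n j u ω) atTop
      (𝓝 (margCDF μ (fun i ω => Xs 0 ω i) j u)) := by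
  have hs : MeasurableSet {ω | Xs 0 ω j ≤ u} :=
    measurableSet_le ((measurable_pi_apply j).comp (hmeas 0)) measurable_const
  have hind : (fun ω => if Xs 0 ω j ≤ u then (1 : ℝ) else 0) = {ω | Xs 0 ω j ≤ u}.indicator 1 := by
    ext ω; simp [Set.indicator_apply]
  have hlaw := strong_law_ae_comp hmeas hindep hident (g := fun v => if v j ≤ u then 1 else 0)
    (Measurable.ite (measurableSet_le (measurable_pi_apply j) measurable_const) measurable_const
      measurable_const) (by rw [hind]; exact (integrable_const 1).indicator hs)
  rw [hind, integral_indicator_one hs] at hlaw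
  filter_upwards [hlaw] with ω hω
  -- `empCDF` is normalised by `(n + 1)⁻¹` rather than `n⁻¹`
  refine (one_mul (margCDF μ (fun i ω => Xs 0 ω i) j u) ▸
    (tendsto_natCast_div_add_atTop (1 : ℝ)).mul hω).congr' ?_
  filter_upwards [eventually_ne_atTop 0] with n hn
  rw [empCDF]
  field_simp

theorem ae_tendstoUniformly_empCDF [IsProbabilityMeasure μ] (hmeas : ∀ n, Measurable (Xs n))
    (hindep : iIndepFun Xs μ) (hident : ∀ n, μ.map (Xs n) = μ.map (Xs 0))
    (hq : ∀ j, ∀ q ∈ Set.Ioo (0 : ℝ) 1, ∃ w, margCDF μ (fun i ω => Xs 0 ω i) j w = q) :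
    ∀ᵐ ω ∂μ, ∀ j, TendstoUniformly (fun n u => empCDF Xs n j u ω)
      (margCDF μ (fun i ω => Xs 0 ω i) j) atTop := by
  choose! w hw using hq
  have hpt : ∀ᵐ ω ∂μ, ∀ j, ∀ q : ℚ, Tendsto (fun n => empCDF Xs n j (w j q) ω) atTop
      (𝓝 (margCDF μ (fun i ω => Xs 0 ω i) j (w j q))) :=
    ae_all_iff.2 fun j => ae_all_iff.2 fun q => ae_tendsto_empCDF hmeas hindep hident j _
  filter_upwards [hpt] with ω hω j
  refine tendstoUniformly_of_tendsto_at_quantiles (fun n => monotone_empCDF n j ω)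
    (margCDF_mono j) (fun n u => empCDF_mem_Icc n j u ω) (margCDF_mem_Icc j) fun q hq0 hq1 => ?_
  have hwq := hw j q ⟨Rat.cast_pos.2 hq0, by exact_mod_cast hq1⟩
  refine ⟨w j q, hwq, ?_⟩
  simpa only [hwq] using hω j q

end Sample

/-- Strong consistency of the rank-based estimator
`l̂_n = Ŷ_n/(1 - Ŷ_n)` of the stable tail dependence function:
`l̂_n(x₁,…,x_d) → l(x₁,…,x_d)` almost surely. -/
theorem statement19 {Ω : Type*} [MeasurableSpace Ω] (μ : Measure Ω) [IsProbabilityMeasure μ]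
    {d : ℕ} (hd : 0 < d) (Xs : ℕ → Ω → Fin d → ℝ)
    (hmeas : ∀ n, Measurable (Xs n))
    (hindep : ProbabilityTheory.iIndepFun
      (m := fun _ : ℕ => (inferInstance : MeasurableSpace (Fin d → ℝ))) Xs μ)
    (hident : ∀ n, Measure.map (Xs n) μ = Measure.map (Xs 0) μ)
    (hmev : IsMEVFrechet μ (fun i ω => Xs 0 ω i))
    (x : Fin d → ℝ) (hx : ∀ i, 0 < x i) :
    ∀ᵐ ω ∂μ, Tendsto (fun n => Yhat hd Xs x n ω / (1 - Yhat hd Xs x n ω)) atTop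
      (nhds (stdf μ (fun i ω' => Xs 0 ω' i) x)) := by
  set X : Fin d → Ω → ℝ := fun i ω => Xs 0 ω i
  set l := stdf μ X x
  have hx0 : ∀ j, 0 ≤ x j := fun j => (hx j).le
  have hZ := measurable_maxPow hd (x := x) fun j => (margCDF_mono (μ := μ) (X := X) j).measurable
  have horacle := strong_law_ae_comp hmeas hindep hident hZ <|
    .of_mem_Icc 0 1 (hZ.comp (hmeas 0)).aemeasurable <| ae_of_all _ fun ω =>
      maxPow_mem_Icc hd (margCDF_mem_Icc (μ := μ) (X := X)) hx0 (Xs 0 ω)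
  have hmean : ∫ ω, maxPow hd (margCDF μ X) x (Xs 0 ω) ∂μ = l / (l + 1) :=
    hmev.integral_maxPow hd hx
  rw [hmean] at horacle
  have hGC := ae_tendstoUniformly_empCDF hmeas hindep hident fun j q hq =>
    ⟨_, hmev.margCDF_inv_neg_log j hq.1 hq.2⟩
  filter_upwards [horacle, hGC] with ω hZω hGCω
  have hY : Tendsto (fun n => Yhat hd Xs x n ω) atTop (𝓝 (l / (l + 1))) :=
    tendsto_mean_of_tendstoUniformly (F := fun n => maxPow hd (fun j u => empCDF Xs n j u ω) x)
      (fun i => Xs i ω) (tendstoUniformly_maxPow hd hGCω (fun n j u => empCDF_mem_Icc n j u ω)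
        margCDF_mem_Icc hx0) hZω
  have hl : 0 < l + 1 := by linarith [stdf_nonneg (μ := μ) (X := X) x]
  have hlim : l / (l + 1) / (1 - l / (l + 1)) = l := by field_simp; ring
  rw [← hlim]
  exact hY.div (tendsto_const_nhds.sub hY) (sub_pos.2 ((div_lt_one hl).2 (lt_add_one l))).ne'
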